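/- arXiv:2510.12716 — 3 statements merged into one kernel-verified Lean document; each statement's English description precedes it below -/
import Mathlib

section
/- Let G be a group acting by isometries on a tree T, φ ∈ Aut(G) acting compatibly on T (i.e. φ·(gx) = φ(g)(φ·x)), and suppose the isometry of T induced by φ is hyperbolic with axis A. If g ∈ Fix(φ) fixes some point x of T, then g fixes the entire axis A pointwise (in particular g fixes every edge of A). -/
/-!
Let `S` be the fixed-point set of `g`. Since `g` commutes with `f`, `S` is `f`-invariant, and
in a tree it is convex, since the geodesic between two fixed vertices is unique. If a vertex `a`
of the axis were outside `S`, let `c ∈ S` be nearest to `a` and `c₁ ∉ S` the next vertex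
towards `a`. The geodesics `[a, c]`, `[c, f c] ⊆ S` and `[f c, f a]` then meet without
backtracking (`c₁` and `f c₁` lie outside `S`), so their concatenation is the geodesic from `a`
to `f a`, of length `2 d(a, c) + d(c, f c) > d(c, f c)`, contradicting minimality of the
displacement of `a`.
-/

namespace SimpleGraph

variable {V : Type*} {T : SimpleGraph V}

lemma Walk.snd_append_of_not_nil {u v w : V} {p : T.Walk u v} (hp : ¬p.Nil) (q : T.Walk v w) :
    (p.append q).snd = p.snd := by
  cases p with
  | nil => simp at hp
  | cons h p => simp

lemma IsAcyclic.isPath_append (hT : T.IsAcyclic) {u v w : V} {p : T.Walk u v}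
    {q : T.Walk v w} (hp : p.IsPath) (hq : q.IsPath) (hpq : p.penultimate ≠ q.snd) :
    (p.append q).IsPath := by
  rw [hT.isPath_iff_isChain, Walk.edges_append, List.isChain_append]
  refine ⟨(hT.isPath_iff_isChain p).1 hp, (hT.isPath_iff_isChain q).1 hq, ?_⟩
  rintro _ hx _ hy rfl
  rw [← List.getLast_of_mem_getLast? hx, Walk.getLast_edges_eq_mk_penultimate_end] at hy
  have hqp := List.head_of_mem_head? hy
  rw [Walk.head_edges_eq_mk_start_snd, Sym2.eq_swap, Sym2.congr_left] at hqp
  exact hpq hqp.symm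

lemma IsAcyclic.length_eq_dist_of_isPath (hT : T.IsAcyclic) {u v : V} {p : T.Walk u v}
    (hp : p.IsPath) : p.length = T.dist u v := by
  obtain ⟨q, hq, hlen⟩ := p.reachable.exists_path_of_dist
  rw [← hlen, Subtype.mk.inj (hT.subsingleton_path u v |>.elim ⟨p, hp⟩ ⟨q, hq⟩)]

lemma IsAcyclic.map_apply_eq_of_mem_support (hT : T.IsAcyclic) (F : T →g T)
    (hF : Function.Injective F) {u v : V} {p : T.Walk u v} (hp : p.IsPath) (hu : F u = u)
    (hv : F v = v) {z : V} (hz : z ∈ p.support) : F z = z := by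
  have hFp : ((p.map F).copy hu hv).IsPath := by
    rw [Walk.isPath_copy]; exact hp.map hF
  have hsupp := congrArg (fun r : T.Path u v => r.1.support)
    (hT.subsingleton_path u v |>.elim ⟨_, hFp⟩ ⟨p, hp⟩)
  simp only [Walk.support_copy, Walk.support_map] at hsupp
  obtain ⟨i, hi, rfl⟩ := List.getElem_of_mem hz
  simpa [List.getElem?_eq_getElem hi] using congrArg (·[i]?) hsupp

def IsPathConvex (T : SimpleGraph V) (S : Set V) : Prop :=
  ∀ ⦃u v : V⦄ (p : T.Walk u v), p.IsPath → u ∈ S → v ∈ S → ∀ z ∈ p.support, z ∈ S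

lemma IsAcyclic.isPathConvex_fixedPoints (hT : T.IsAcyclic) (F : T →g T)
    (hF : Function.Injective F) : T.IsPathConvex (Function.fixedPoints F) :=
  fun _ _ _ hp hu hv _ hz => hT.map_apply_eq_of_mem_support F hF hp hu hv hz

theorem IsAcyclic.mem_of_minimal_displacement (hconn : T.Connected) (hT : T.IsAcyclic)
    (f : T →g T) (hf : Function.Injective f) (hfix : ∀ v, f v ≠ v) {S : Set V}
    (hS : S.Nonempty) (hfS : ∀ v, f v ∈ S ↔ v ∈ S) (hSconv : T.IsPathConvex S) {a : V}
    (ha : ∀ v, T.dist a (f a) ≤ T.dist v (f v)) : a ∈ S := by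
  by_contra haS
  obtain ⟨c, hcS, hcmin⟩ : ∃ c ∈ S, ∀ s ∈ S, T.dist c a ≤ T.dist s a :=
    ⟨_, Function.argminOn_mem (T.dist · a) S hS,
      fun _ hs => Function.argminOn_le (T.dist · a) S hs⟩
  obtain ⟨R, hR, hRlen⟩ := hconn.exists_path_of_dist c a
  have hRnil : ¬R.Nil := fun h => haS (h.eq ▸ hcS)
  have hc₁S : R.snd ∉ S := by
    intro h
    have hc₁a := (hcmin _ h).trans (dist_le R.tail)
    have hRtail := R.length_tail_add_one hRnil
    omega
  obtain ⟨P, hP, hPlen⟩ := hconn.exists_path_of_dist c (f c)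
  have hPS : ∀ z ∈ P.support, z ∈ S := hSconv P hP hcS ((hfS c).2 hcS)
  have hPnil : ¬P.Nil := fun h => hfix c h.eq.symm
  have hW : (R.reverse.append (P.append (R.map f))).IsPath := by
    refine hT.isPath_append hR.reverse (hT.isPath_append hP (hR.map hf) ?_) ?_
    · rw [Walk.snd, Walk.getVert_map]
      exact fun h => hc₁S ((hfS _).1 (h ▸ hPS _ (P.getVert_mem_support _)))
    · rw [Walk.penultimate_reverse, Walk.snd_append_of_not_nil hPnil]
      exact fun h => hc₁S (h ▸ hPS _ (P.getVert_mem_support _))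
  have hWlen := hT.length_eq_dist_of_isPath hW
  simp only [Walk.length_append, Walk.length_reverse, Walk.length_map] at hWlen
  have hcdisp := ha c
  have hRpos := Walk.not_nil_iff_lt_length.1 hRnil
  omega

end SimpleGraph

/-- If `φ` acts compatibly on a tree as a hyperbolic isometry `f` (no fixed vertex),
and `g ∈ Fix(φ)` fixes some vertex, then `g` fixes the whole axis (minset) of `f`. -/
theorem stmt11 (G V : Type*) [Group G] (T : SimpleGraph V)
    (hconn : T.Connected) (hacyc : T.IsAcyclic)
    [MulAction G V] (hadj : ∀ (g : G) (u v : V), T.Adj u v → T.Adj (g • u) (g • v))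
    (φ : G ≃* G) (f : V ≃ V) (hf : ∀ u v : V, T.Adj u v → T.Adj (f u) (f v))
    (hcompat : ∀ (g : G) (y : V), f (g • y) = φ g • f y)
    (hhyp : ∀ v : V, f v ≠ v)
    (g : G) (hg : φ g = g) (x : V) (hx : g • x = x) :
    ∀ a : V, T.dist a (f a) = sInf (Set.range fun v : V => T.dist v (f v)) →
      g • a = a := by
  intro a ha
  have hfg : ∀ v, f (g • v) = g • f v := fun v => by rw [hcompat, hg]
  refine hacyc.mem_of_minimal_displacement hconn (f := ⟨f, hf _ _⟩) f.injective hhyp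
    (S := Function.fixedPoints (g • ·)) ⟨x, hx⟩ (fun v => ?_)
    (hacyc.isPathConvex_fixedPoints ⟨(g • ·), hadj g _ _⟩ (MulAction.injective g))
    (fun v => ha ▸ Nat.sInf_le ⟨v, rfl⟩)
  show g • f v = f v ↔ g • v = v
  rw [← hfg, f.injective.eq_iff]
end

section
/- Let Δ : G → ℚ* be a group homomorphism, g ∈ G with Δ(g) = p/q in lowest terms where p, q are nonzero coprime integers and q ∉ {1, -1} (so Δ(g) ∉ ℤ), and let l be a nonzero integer. Define l_k = l·∑_{i=0}^{k-1} Δ(g)^i ∈ ℚ for k ≥ 1. Then for sufficiently large k, l_k is not an integer. -/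
/-- If `Δ(g) = p/q` in lowest terms with `q ∉ {±1}` and `l ≠ 0`, then
`l_k = l·∑_{i<k} Δ(g)^i` is not an integer for all sufficiently large `k`. -/
theorem stmt15 (G : Type*) [Group G] (Δ : G →* ℚˣ) (g : G)
    (p q : ℤ) (hp : p ≠ 0) (hq : q ≠ 0) (hcop : Int.gcd p q = 1)
    (hq1 : q ≠ 1) (hq1' : q ≠ -1)
    (hΔ : ((Δ g : ℚˣ) : ℚ) = (p : ℚ) / q)
    (l : ℤ) (hl : l ≠ 0) :
    ∃ K : ℕ, ∀ k ≥ K, ∀ m : ℤ,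
      (m : ℚ) ≠ (l : ℚ) * ∑ i ∈ Finset.range k, ((Δ g : ℚˣ) : ℚ) ^ i := by
  -- pick a prime r dividing q
  have hqn1 : q.natAbs ≠ 1 := by
    intro h
    rcases Int.natAbs_eq_iff.mp h with h' | h' <;> simp_all
  obtain ⟨r, hr, hrq⟩ := Nat.exists_prime_and_dvd hqn1
  have hrqZ : (r : ℤ) ∣ q := Int.natAbs_dvd_natAbs.mp (by simpa using hrq)
  have hrp : ¬ (r : ℤ) ∣ p := by
    intro hdvd
    have : (r : ℤ) ∣ Int.gcd p q := Int.dvd_coe_gcd hdvd hrqZ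
    rw [hcop] at this
    exact Nat.Prime.one_lt hr |>.ne' (by exact_mod_cast Int.eq_one_of_dvd_one (by norm_num) this)
  refine ⟨l.natAbs + 1, ?_⟩
  intro k hk m hm
  obtain ⟨n, rfl⟩ : ∃ n, k = n + 1 := ⟨k - 1, by omega⟩
  have hn : l.natAbs ≤ n := by omega
  set T : ℤ := ∑ i ∈ Finset.range (n + 1), p ^ i * q ^ (n - i) with hT
  -- key identity over ℚ
  have key : (m : ℚ) * (q : ℚ) ^ n = (l : ℚ) * (T : ℚ) := by
    rw [hm, mul_assoc, hΔ]
    congr 1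
    rw [hT]
    push_cast
    rw [Finset.sum_mul]
    refine Finset.sum_congr rfl fun i hi => ?_
    have hi' : i ≤ n := by simpa using Nat.lt_succ_iff.mp (Finset.mem_range.mp hi)
    have hqQ : (q : ℚ) ≠ 0 := Int.cast_ne_zero.mpr hq
    rw [div_pow]
    rw [div_mul_eq_mul_div, show (q : ℚ) ^ n = q ^ i * q ^ (n - i) by
      rw [← pow_add]; congr 1; omega]
    field_simp
  have keyZ : m * q ^ n = l * T := by exact_mod_cast key
  -- r does not divide T
  have hrT : ¬ (r : ℤ) ∣ T := by
    intro hdvd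
    have hTsplit : T = (∑ i ∈ Finset.range n, p ^ i * q ^ (n - i)) + p ^ n := by
      rw [hT, Finset.sum_range_succ]
      simp
    have hdvdsum : (r : ℤ) ∣ ∑ i ∈ Finset.range n, p ^ i * q ^ (n - i) := by
      refine Finset.dvd_sum fun i hi => ?_
      have hi' : i < n := Finset.mem_range.mp hi
      have : (r : ℤ) ∣ q ^ (n - i) := hrqZ.trans (dvd_pow_self q (by omega))
      exact this.mul_left _
    have : (r : ℤ) ∣ p ^ n := by
      have := (Int.dvd_sub hdvd hdvdsum)
      rwa [hTsplit, add_sub_cancel_left] at this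
    exact hrp (Int.Prime.dvd_pow' (by exact_mod_cast hr) this)
  -- r^n divides l
  have hdvd1 : (r : ℤ) ^ n ∣ l * T := by
    rw [← keyZ]
    exact Dvd.dvd.mul_left (pow_dvd_pow_of_dvd hrqZ n) m
  have hcoprime : IsCoprime ((r : ℤ) ^ n) T :=
    IsCoprime.pow_left (((Nat.prime_iff_prime_int.mp hr).coprime_iff_not_dvd).mpr hrT)
  have hdvdl : (r : ℤ) ^ n ∣ l := hcoprime.dvd_of_dvd_mul_right hdvd1
  -- size contradiction
  have h1 : (r : ℤ) ^ n ≤ |l| := Int.le_of_dvd (abs_pos.mpr hl) ((dvd_abs _ _).mpr hdvdl)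
  have h2 : (2 : ℤ) ^ n ≤ (r : ℤ) ^ n := by
    apply pow_le_pow_left₀ (by norm_num)
    exact_mod_cast hr.two_le
  have h3 : (n : ℤ) < 2 ^ n := by exact_mod_cast (Nat.lt_two_pow_self (n := n))
  have h4 : |l| = (l.natAbs : ℤ) := (Int.abs_eq_natAbs l)
  omega
end

section
/- Let r ∈ ℚ with r = p/q in lowest terms, |q| ≥ 2, and let l be a nonzero integer, and let s_k = l·(1 + r + r² + ⋯ + r^{k-1}). Then for any prime q' dividing q, v_{q'}(s_k) = v_{q'}(l) − (k−1)·v_{q'}(q), so s_k ∉ ℤ for k > v_{q'}(l)/v_{q'}(q) + 1. -/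
/-- With `r = p/q` in lowest terms, `|q| ≥ 2`, `l ≠ 0` and a prime `q' ∣ q`, the
`q'`-adic valuation of `s_k = l·(1 + r + ⋯ + r^{k-1})` is
`v_{q'}(l) − (k−1)·v_{q'}(q)`; hence `s_k ∉ ℤ` once `k > v_{q'}(l)/v_{q'}(q) + 1`. -/
theorem stmt16 (p q : ℤ) (hcop : Int.gcd p q = 1) (hq : 2 ≤ |q|)
    (l : ℤ) (hl : l ≠ 0) (q' : ℕ) (hq' : q'.Prime) (hdvd : (q' : ℤ) ∣ q)
    (k : ℕ) (hk : 1 ≤ k) :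
    padicValRat q' ((l : ℚ) * ∑ i ∈ Finset.range k, ((p : ℚ) / q) ^ i) =
        (padicValInt q' l : ℤ) - ((k : ℤ) - 1) * (padicValInt q' q : ℤ) ∧
      ((k : ℤ) > (padicValInt q' l : ℤ) / (padicValInt q' q : ℤ) + 1 →
        ∀ m : ℤ, (m : ℚ) ≠ (l : ℚ) * ∑ i ∈ Finset.range k, ((p : ℚ) / q) ^ i) := by
  haveI : Fact q'.Prime := ⟨hq'⟩
  obtain ⟨n, rfl⟩ : ∃ n, k = n + 1 := ⟨k - 1, by omega⟩
  have hq0 : q ≠ 0 := by rintro rfl; simp at hq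
  have hqQ : (q : ℚ) ≠ 0 := by exact_mod_cast hq0
  have hqp : ¬ (q' : ℤ) ∣ p := by
    intro h
    have hcop' : IsCoprime p q := Int.isCoprime_iff_gcd_eq_one.mpr hcop
    have := hcop'.isUnit_of_dvd' h hdvd
    rw [Int.isUnit_iff] at this
    have := hq'.two_le; omega
  have hpq : ¬ (q' : ℤ) ∣ (p - q) := by
    intro h; exact hqp (by have := dvd_add h hdvd; simpa using this)
  have hpqk : ¬ (q' : ℤ) ∣ (p ^ (n+1) - q ^ (n+1)) := by
    intro h
    have hqk : (q' : ℤ) ∣ q ^ (n+1) := hdvd.trans (dvd_pow_self q (Nat.succ_ne_zero n))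
    have : (q' : ℤ) ∣ p ^ (n+1) := by have := dvd_add h hqk; simpa using this
    exact hqp (Int.Prime.dvd_pow' hq' this)
  have hpq0 : p - q ≠ 0 := fun h => hpq (h ▸ dvd_zero _)
  have hpqk0 : p ^ (n+1) - q ^ (n+1) ≠ 0 := fun h => hpqk (h ▸ dvd_zero _)
  have hr1 : (p : ℚ) / q ≠ 1 := by
    intro h
    rw [div_eq_one_iff_eq hqQ] at h
    have hpq' : p = q := by exact_mod_cast h
    exact hqp (hpq' ▸ hdvd)
  have hsum : ∑ i ∈ Finset.range (n+1), ((p : ℚ) / q) ^ i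
      = ((p ^ (n+1) - q ^ (n+1) : ℤ) : ℚ) / ((q ^ n * (p - q) : ℤ) : ℚ) := by
    rw [geom_sum_eq hr1]
    have hs : (p : ℚ) / q - 1 ≠ 0 := sub_ne_zero.mpr hr1
    have hpqQ : ((p - q : ℤ) : ℚ) ≠ 0 := by exact_mod_cast hpq0
    have hqn : ((q : ℚ)) ^ n ≠ 0 := pow_ne_zero n hqQ
    rw [div_eq_div_iff hs (by push_cast at hpqQ ⊢; positivity)]
    push_cast
    rw [div_pow]
    field_simp
    ring
  have hval : padicValRat q' ((l : ℚ) * ∑ i ∈ Finset.range (n+1), ((p : ℚ) / q) ^ i)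
      = (padicValInt q' l : ℤ) - ((n : ℤ)) * (padicValInt q' q : ℤ) := by
    rw [hsum]
    have h1 : ((p ^ (n+1) - q ^ (n+1) : ℤ) : ℚ) ≠ 0 := by exact_mod_cast hpqk0
    have h2 : ((q ^ n * (p - q) : ℤ) : ℚ) ≠ 0 := by
      exact_mod_cast mul_ne_zero (pow_ne_zero n hq0) hpq0
    have hlQ : (l : ℚ) ≠ 0 := by exact_mod_cast hl
    rw [padicValRat.mul hlQ (by rw [hsum] at *; exact div_ne_zero h1 h2)]
    rw [padicValRat.div h1 h2, padicValRat.of_int, padicValRat.of_int, padicValRat.of_int,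
      padicValInt.eq_zero_of_not_dvd hpqk,
      padicValInt.mul (pow_ne_zero n hq0) hpq0,
      padicValInt.eq_zero_of_not_dvd hpq]
    have hpow : padicValInt q' (q ^ n) = n * padicValInt q' q := by
      unfold padicValInt
      rw [Int.natAbs_pow, padicValNat.pow _ n]
    rw [hpow]
    push_cast
    ring
  refine ⟨by rw [hval]; push_cast; ring, ?_⟩
  intro hbig m hm
  have hvq : 1 ≤ (padicValInt q' q : ℤ) := by
    have : 1 ≤ padicValInt q' q := by
      rw [padicValInt]
      refine one_le_padicValNat_of_dvd (Int.natAbs_ne_zero.mpr hq0) ?_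
      simpa using Int.natAbs_dvd_natAbs.mpr hdvd
    exact_mod_cast this
  have hlt : (padicValInt q' l : ℤ) < (n : ℤ) * (padicValInt q' q : ℤ) := by
    have h1 : (padicValInt q' l : ℤ) < ((padicValInt q' l : ℤ) / (padicValInt q' q : ℤ) + 1) * (padicValInt q' q : ℤ) :=
      Int.lt_ediv_add_one_mul_self _ (by omega)
    have h2 : (padicValInt q' l : ℤ) / (padicValInt q' q : ℤ) + 1 ≤ (n : ℤ) := by push_cast at hbig ⊢; omega
    calc (padicValInt q' l : ℤ) < _ := h1
      _ ≤ (n : ℤ) * (padicValInt q' q : ℤ) := by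
        exact mul_le_mul_of_nonneg_right h2 (by omega)
  have hneg : padicValRat q' ((l : ℚ) * ∑ i ∈ Finset.range (n+1), ((p : ℚ) / q) ^ i) < 0 := by
    rw [hval]; omega
  rw [← hm, padicValRat.of_int] at hneg
  omega
end
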